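/- Least upper bounds of chains of event-structure embeddings exist: given a sequence of event structures S₀, S₁, S₂, … and rigid embeddings fᵢ : Sᵢ ↪ Sᵢ₊₁ for each i ∈ ℕ, there exists an event structure S together with rigid embeddings gᵢ : Sᵢ ↪ S satisfying gᵢ₊₁ ∘ fᵢ = gᵢ for all i, such that S is the smallest such event structure: every event of S lies in the image of some gᵢ. -/
import Mathlib


/-- An event structure: a set of events with a causal partial order in which
every event has finitely many causes, and a symmetric irreflexive conflict
relation satisfying conflict inheritance. -/
structure EventStructure : Type 1 where
  E : Type
  le : E → E → Prop
  le_refl : ∀ e, le e e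
  le_trans : ∀ a b c, le a b → le b c → le a c
  le_antisymm : ∀ a b, le a b → le b a → a = b
  finite_causes : ∀ e, Set.Finite {e' | le e' e}
  conflict : E → E → Prop
  conflict_symm : ∀ a b, conflict a b → conflict b a
  conflict_irrefl : ∀ a, ¬ conflict a a
  conflict_inherit : ∀ a b c, conflict a b → le b c → conflict a c

/-- A rigid embedding between event structures: an injective map on events
whose image is down-closed, preserving and reflecting causality and
conflict. -/
structure RigidEmb (S T : EventStructure) : Type where
  map : S.E → T.E
  inj : Function.Injective map
  downClosed : ∀ (a : S.E) (b : T.E), T.le b (map a) → ∃ a', map a' = b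
  le_iff : ∀ a b : S.E, S.le a b ↔ T.le (map a) (map b)
  conflict_iff : ∀ a b : S.E, S.conflict a b ↔ T.conflict (map a) (map b)

section ChainLub

variable (S : ℕ → EventStructure) (f : ∀ i, RigidEmb (S i) (S (i + 1)))

/-- Transport an event of `S i` forward to `S j` along the chain. -/
def ESlift {i j : ℕ} (h : i ≤ j) (a : (S i).E) : (S j).E :=
  Nat.leRec (motive := fun m _ => (S m).E) a (fun k _ b => (f k).map b) h

@[simp] lemma ESlift_self {i : ℕ} (h : i ≤ i) (a : (S i).E) : ESlift S f h a = a :=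
  Nat.leRec_self _ _

lemma ESlift_succ {i j : ℕ} (h1 : i ≤ j) (h2 : i ≤ j + 1) (a : (S i).E) :
    ESlift S f h2 a = (f j).map (ESlift S f h1 a) :=
  Nat.leRec_succ _ _ h1

lemma ESlift_trans {i j k : ℕ} (h1 : i ≤ j) (h2 : j ≤ k) (a : (S i).E) :
    ESlift S f h2 (ESlift S f h1 a) = ESlift S f (h1.trans h2) a := by
  induction k, h2 using Nat.le_induction with
  | base => simp
  | succ k hk ih =>
    rw [ESlift_succ S f hk, ESlift_succ S f (h1.trans hk), ih]

lemma ESlift_le_iff {i j : ℕ} (h : i ≤ j) (a b : (S i).E) :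
    (S i).le a b ↔ (S j).le (ESlift S f h a) (ESlift S f h b) := by
  induction j, h using Nat.le_induction with
  | base => simp
  | succ k hk ih =>
    rw [ESlift_succ S f hk, ESlift_succ S f hk, ← (f k).le_iff]
    exact ih

lemma ESlift_conflict_iff {i j : ℕ} (h : i ≤ j) (a b : (S i).E) :
    (S i).conflict a b ↔ (S j).conflict (ESlift S f h a) (ESlift S f h b) := by
  induction j, h using Nat.le_induction with
  | base => simp
  | succ k hk ih =>
    rw [ESlift_succ S f hk, ESlift_succ S f hk, ← (f k).conflict_iff]
    exact ih

lemma ESlift_inj {i j : ℕ} (h : i ≤ j) : Function.Injective (ESlift S f h) := by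
  induction j, h using Nat.le_induction with
  | base => intro a b hab; simpa using hab
  | succ k hk ih =>
    intro a b hab
    rw [ESlift_succ S f hk, ESlift_succ S f hk] at hab
    exact ih ((f k).inj hab)

lemma ESlift_down {i j : ℕ} (h : i ≤ j) (a : (S i).E) :
    ∀ b : (S j).E, (S j).le b (ESlift S f h a) → ∃ c, ESlift S f h c = b := by
  induction j, h using Nat.le_induction with
  | base => intro b _; exact ⟨b, by simp⟩
  | succ k hk ih =>
    intro b hb
    rw [ESlift_succ S f hk] at hb
    obtain ⟨b', hb'⟩ := (f k).downClosed _ b hb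
    have hble : (S k).le b' (ESlift S f hk a) := by
      rw [(f k).le_iff, hb']; exact hb
    obtain ⟨c, hc⟩ := ih b' hble
    exact ⟨c, by rw [ESlift_succ S f hk, hc, hb']⟩

/-- Two events of the chain are identified if they agree at some common stage. -/
def ESRel (x y : Σ i, (S i).E) : Prop :=
  ∃ (k : ℕ) (hx : x.1 ≤ k) (hy : y.1 ≤ k), ESlift S f hx x.2 = ESlift S f hy y.2

lemma ESRel_up {x y : Σ i, (S i).E} {k k' : ℕ} (hk : k ≤ k')
    (hx : x.1 ≤ k) (hy : y.1 ≤ k) (h : ESlift S f hx x.2 = ESlift S f hy y.2) :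
    ESlift S f (hx.trans hk) x.2 = ESlift S f (hy.trans hk) y.2 := by
  rw [← ESlift_trans S f hx hk, ← ESlift_trans S f hy hk, h]

lemma ESRel_equiv : Equivalence (ESRel S f) where
  refl x := ⟨x.1, le_rfl, le_rfl, rfl⟩
  symm := fun ⟨k, hx, hy, h⟩ => ⟨k, hy, hx, h.symm⟩
  trans := by
    rintro x y z ⟨k1, hx, hy, h1⟩ ⟨k2, hy2, hz, h2⟩
    refine ⟨max k1 k2, hx.trans (le_max_left k1 k2), hz.trans (le_max_right k1 k2), ?_⟩
    have e1 := ESRel_up S f (le_max_left k1 k2) hx hy h1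
    have e2 := ESRel_up S f (le_max_right k1 k2) hy2 hz h2
    exact e1.trans e2

def ESSetoid : Setoid (Σ i, (S i).E) := ⟨ESRel S f, ESRel_equiv S f⟩

def ESLe (x y : Σ i, (S i).E) : Prop :=
  ∃ (k : ℕ) (hx : x.1 ≤ k) (hy : y.1 ≤ k),
    (S k).le (ESlift S f hx x.2) (ESlift S f hy y.2)

def ESConf (x y : Σ i, (S i).E) : Prop :=
  ∃ (k : ℕ) (hx : x.1 ≤ k) (hy : y.1 ≤ k),
    (S k).conflict (ESlift S f hx x.2) (ESlift S f hy y.2)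

lemma ESLe_iff {x y : Σ i, (S i).E} {k : ℕ} (hx : x.1 ≤ k) (hy : y.1 ≤ k) :
    ESLe S f x y ↔ (S k).le (ESlift S f hx x.2) (ESlift S f hy y.2) := by
  constructor
  · rintro ⟨k0, hx0, hy0, h⟩
    have hm1 : k ≤ max k k0 := le_max_left k k0
    have hm2 : k0 ≤ max k k0 := le_max_right k k0
    have h' : (S (max k k0)).le (ESlift S f (hx0.trans hm2) x.2)
        (ESlift S f (hy0.trans hm2) y.2) := by
      rw [← ESlift_trans S f hx0 hm2, ← ESlift_trans S f hy0 hm2]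
      exact (ESlift_le_iff S f hm2 _ _).mp h
    refine (ESlift_le_iff S f hm1 _ _).mpr ?_
    rw [ESlift_trans S f hx hm1, ESlift_trans S f hy hm1]
    exact h'
  · exact fun h => ⟨k, hx, hy, h⟩

lemma ESConf_iff {x y : Σ i, (S i).E} {k : ℕ} (hx : x.1 ≤ k) (hy : y.1 ≤ k) :
    ESConf S f x y ↔ (S k).conflict (ESlift S f hx x.2) (ESlift S f hy y.2) := by
  constructor
  · rintro ⟨k0, hx0, hy0, h⟩
    have hm1 : k ≤ max k k0 := le_max_left k k0
    have hm2 : k0 ≤ max k k0 := le_max_right k k0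
    have h' : (S (max k k0)).conflict (ESlift S f (hx0.trans hm2) x.2)
        (ESlift S f (hy0.trans hm2) y.2) := by
      rw [← ESlift_trans S f hx0 hm2, ← ESlift_trans S f hy0 hm2]
      exact (ESlift_conflict_iff S f hm2 _ _).mp h
    refine (ESlift_conflict_iff S f hm1 _ _).mpr ?_
    rw [ESlift_trans S f hx hm1, ESlift_trans S f hy hm1]
    exact h'
  · exact fun h => ⟨k, hx, hy, h⟩

lemma ESLe_congr {x x' y y' : Σ i, (S i).E} (hx : ESRel S f x x') (hy : ESRel S f y y') :
    ESLe S f x y ↔ ESLe S f x' y' := by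
  obtain ⟨k1, hxa, hxb, ex⟩ := hx
  obtain ⟨k2, hya, hyb, ey⟩ := hy
  have hm1 : k1 ≤ max k1 k2 := le_max_left k1 k2
  have hm2 : k2 ≤ max k1 k2 := le_max_right k1 k2
  rw [ESLe_iff S f (hxa.trans hm1) (hya.trans hm2),
    ESLe_iff S f (hxb.trans hm1) (hyb.trans hm2),
    ESRel_up S f hm1 hxa hxb ex, ESRel_up S f hm2 hya hyb ey]

lemma ESConf_congr {x x' y y' : Σ i, (S i).E} (hx : ESRel S f x x') (hy : ESRel S f y y') :
    ESConf S f x y ↔ ESConf S f x' y' := by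
  obtain ⟨k1, hxa, hxb, ex⟩ := hx
  obtain ⟨k2, hya, hyb, ey⟩ := hy
  have hm1 : k1 ≤ max k1 k2 := le_max_left k1 k2
  have hm2 : k2 ≤ max k1 k2 := le_max_right k1 k2
  rw [ESConf_iff S f (hxa.trans hm1) (hya.trans hm2),
    ESConf_iff S f (hxb.trans hm1) (hyb.trans hm2),
    ESRel_up S f hm1 hxa hxb ex, ESRel_up S f hm2 hya hyb ey]

/-- The colimit event structure. -/
def ColimES : EventStructure where
  E := Quotient (ESSetoid S f)
  le := Quotient.lift₂ (ESLe S f)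
    (fun _ _ _ _ ha hb => propext (ESLe_congr S f ha hb))
  le_refl := by
    refine fun e => Quotient.inductionOn e ?_
    intro x
    exact ⟨x.1, le_rfl, le_rfl, (S x.1).le_refl _⟩
  le_trans := by
    refine fun a b c => Quotient.inductionOn₃ a b c ?_
    intro x y z hxy hyz
    have hxy' : ESLe S f x y := hxy
    have hyz' : ESLe S f y z := hyz
    set m := max (max x.1 y.1) z.1 with hm
    have hx : x.1 ≤ m := le_trans (le_max_left _ _) (le_max_left _ _)
    have hy : y.1 ≤ m := le_trans (le_max_right _ _) (le_max_left _ _)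
    have hz : z.1 ≤ m := le_max_right _ _
    have h1 := (ESLe_iff S f hx hy).mp hxy'
    have h2 := (ESLe_iff S f hy hz).mp hyz'
    show ESLe S f x z
    exact (ESLe_iff S f hx hz).mpr ((S m).le_trans _ _ _ h1 h2)
  le_antisymm := by
    refine fun a b => Quotient.inductionOn₂ a b ?_
    intro x y hxy hyx
    have hxy' : ESLe S f x y := hxy
    have hyx' : ESLe S f y x := hyx
    have hx : x.1 ≤ max x.1 y.1 := le_max_left _ _
    have hy : y.1 ≤ max x.1 y.1 := le_max_right _ _
    have h1 := (ESLe_iff S f hx hy).mp hxy'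
    have h2 := (ESLe_iff S f hy hx).mp hyx'
    exact Quotient.sound ⟨max x.1 y.1, hx, hy, (S _).le_antisymm _ _ h1 h2⟩
  finite_causes := by
    refine fun e => Quotient.inductionOn e ?_
    rintro ⟨i, a⟩
    refine Set.Finite.subset (((S i).finite_causes a).image
      (fun c => Quotient.mk (ESSetoid S f) ⟨i, c⟩)) ?_
    intro e' he'
    obtain ⟨y, rfl⟩ := Quotient.exists_rep e'
    have he : ESLe S f y ⟨i, a⟩ := he'
    have hy : y.1 ≤ max i y.1 := le_max_right _ _
    have hi : i ≤ max i y.1 := le_max_left _ _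
    have h := (ESLe_iff S f hy hi).mp he
    obtain ⟨c, hc⟩ := ESlift_down S f hi a _ h
    rw [← hc] at h
    refine ⟨c, (ESlift_le_iff S f hi c a).mpr h, ?_⟩
    exact Quotient.sound ⟨max i y.1, hi, hy, hc⟩
  conflict := Quotient.lift₂ (ESConf S f)
    (fun _ _ _ _ ha hb => propext (ESConf_congr S f ha hb))
  conflict_symm := by
    refine fun a b => Quotient.inductionOn₂ a b ?_
    rintro x y ⟨k, hx, hy, h⟩
    exact ⟨k, hy, hx, (S k).conflict_symm _ _ h⟩
  conflict_irrefl := by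
    refine fun a => Quotient.inductionOn a ?_
    rintro x ⟨k, hx, hy, h⟩
    exact (S k).conflict_irrefl _ h
  conflict_inherit := by
    refine fun a b c => Quotient.inductionOn₃ a b c ?_
    intro x y z hxy hyz
    have hxy' : ESConf S f x y := hxy
    have hyz' : ESLe S f y z := hyz
    set m := max (max x.1 y.1) z.1 with hm
    have hx : x.1 ≤ m := le_trans (le_max_left _ _) (le_max_left _ _)
    have hy : y.1 ≤ m := le_trans (le_max_right _ _) (le_max_left _ _)
    have hz : z.1 ≤ m := le_max_right _ _
    have h1 := (ESConf_iff S f hx hy).mp hxy'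
    have h2 := (ESLe_iff S f hy hz).mp hyz'
    show ESConf S f x z
    exact (ESConf_iff S f hx hz).mpr ((S m).conflict_inherit _ _ _ h1 h2)

/-- The canonical embedding of each stage into the colimit. -/
def ColimEmb (i : ℕ) : RigidEmb (S i) (ColimES S f) where
  map a := Quotient.mk (ESSetoid S f) ⟨i, a⟩
  inj := by
    intro a b hab
    obtain ⟨k, hx, hy, h⟩ := Quotient.exact hab
    exact ESlift_inj S f hx h
  downClosed := by
    intro a b hb
    obtain ⟨y, rfl⟩ := Quotient.exists_rep b
    have he : ESLe S f y ⟨i, a⟩ := hb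
    have hy : y.1 ≤ max i y.1 := le_max_right _ _
    have hi : i ≤ max i y.1 := le_max_left _ _
    have h := (ESLe_iff S f hy hi).mp he
    obtain ⟨c, hc⟩ := ESlift_down S f hi a _ h
    exact ⟨c, Quotient.sound ⟨max i y.1, hi, hy, hc⟩⟩
  le_iff := by
    intro a b
    constructor
    · intro h
      exact ⟨i, le_rfl, le_rfl, by simpa using h⟩
    · intro h
      have h' : ESLe S f ⟨i, a⟩ ⟨i, b⟩ := h
      have := (ESLe_iff S f (le_rfl : i ≤ i) (le_rfl : i ≤ i)).mp h'
      simpa using this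
  conflict_iff := by
    intro a b
    constructor
    · intro h
      exact ⟨i, le_rfl, le_rfl, by simpa using h⟩
    · intro h
      have h' : ESConf S f ⟨i, a⟩ ⟨i, b⟩ := h
      have := (ESConf_iff S f (le_rfl : i ≤ i) (le_rfl : i ≤ i)).mp h'
      simpa using this

end ChainLub

/-- Least upper bounds of ω-chains of rigid embeddings of event
structures exist: there is an event structure T with compatible rigid
embeddings of each Sᵢ, which is smallest in the sense that every event of T is
in the image of some embedding. -/
theorem chain_of_rigid_embeddings_has_lub
    (S : ℕ → EventStructure) (f : ∀ i, RigidEmb (S i) (S (i + 1))) :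
    ∃ (T : EventStructure) (g : ∀ i, RigidEmb (S i) T),
      (∀ i (a : (S i).E), (g (i + 1)).map ((f i).map a) = (g i).map a) ∧
      (∀ e : T.E, ∃ (i : ℕ) (a : (S i).E), (g i).map a = e) := by
  refine ⟨ColimES S f, ColimEmb S f, ?_, ?_⟩
  · intro i a
    refine Quotient.sound ⟨i + 1, le_rfl, Nat.le_succ i, ?_⟩
    rw [ESlift_self, ESlift_succ S f le_rfl (Nat.le_succ i), ESlift_self]
  · refine fun e => Quotient.inductionOn e ?_
    rintro ⟨i, a⟩
    exact ⟨i, a, rfl⟩
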